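/- For all ε, δ ∈ ℝ and j ∈ {1,2}: (i) the Miura map M_j(ε;δ) : ℳ²𝒯 → ℳ𝒯 is a Poisson map from ℳ²𝒯 equipped with the bracket {·,·}_{123} to ℳ𝒯 equipped with the bracket {·,·}_{12} + δ{·,·}_{23}, i.e. DM_j(ε;δ)(x)·J_{123}(x)·DM_j(ε;δ)(x)ᵀ = (J_{12} + δJ_{23})(M_j(ε;δ)(x)) for all x; and (ii) the pull-back of the flow MTL(ε) under M_j(ε;δ) coincides with M²TL(ε,δ): DM_j(ε;δ)(r,s)·F_{M²TL(ε,δ)}(r,s) = F_{MTL(ε)}(M_j(ε;δ)(r,s)) for all (r,s). -/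
import Mathlib


open scoped BigOperators

/-- Index set for the periodic phase space `ℝ^{2N}`: `Sum.inl k` indexes the first
family of coordinates and `Sum.inr k` the second family, `k ∈ ℤ/Nℤ`. -/
abbrev Idx (N : ℕ) : Type := (ZMod N) ⊕ (ZMod N)

/-- The phase space `ℝ^{2N}`. -/
abbrev Phase (N : ℕ) : Type := Idx N → ℝ

/-- First family of coordinates. -/
def c1 {N : ℕ} (x : Phase N) (k : ZMod N) : ℝ := x (Sum.inl k)

/-- Second family of coordinates. -/
def c2 {N : ℕ} (x : Phase N) (k : ZMod N) : ℝ := x (Sum.inr k)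

/-- A structure matrix on `Phase N`. -/
abbrev SM (N : ℕ) : Type := Phase N → Idx N → Idx N → ℝ

/-- Partial derivative of `F` at `x` in the `i`-th coordinate direction. -/
noncomputable def pderiv {N : ℕ} [NeZero N] (i : Idx N) (F : Phase N → ℝ)
    (x : Phase N) : ℝ :=
  fderiv ℝ F x (Pi.single i 1)

/-- The bracket of two functions associated with a structure matrix `J`:
`{F,G}(x) = ∑_{i,j} ∂_i F(x) · J_{ij}(x) · ∂_j G(x)`. -/
noncomputable def bracket {N : ℕ} [NeZero N] (J : SM N) (F G : Phase N → ℝ)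
    (x : Phase N) : ℝ :=
  ∑ i : Idx N, ∑ j : Idx N, pderiv i F x * J x i j * pderiv j G x

/-- The Jacobi identity for `J` holds at every point satisfying `P`. -/
def JacobiOn {N : ℕ} [NeZero N] (J : SM N) (P : Phase N → Prop) : Prop :=
  ∀ F G H : Phase N → ℝ, ContDiff ℝ (⊤ : ℕ∞) F → ContDiff ℝ (⊤ : ℕ∞) G →
    ContDiff ℝ (⊤ : ℕ∞) H → ∀ x : Phase N, P x →
      bracket J (bracket J F G) H x + bracket J (bracket J G H) F x +
        bracket J (bracket J H F) G x = 0

/-- `J` defines a Poisson bracket: the Jacobi identity holds everywhere. -/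
def IsPoisson {N : ℕ} [NeZero N] (J : SM N) : Prop :=
  JacobiOn J fun _ => True

/-- `f(x) = J(x)∇H(x)`: the vector field `f` is Hamiltonian at `x` with respect
to the structure matrix `J`, with Hamilton function `H`. -/
def HamAt {N : ℕ} [NeZero N] (J : SM N) (f : Phase N → Phase N)
    (H : Phase N → ℝ) (x : Phase N) : Prop :=
  ∀ i : Idx N, f x i = ∑ j : Idx N, J x i j * pderiv j H x

/-- `Dφ(x)·J(x)·Dφ(x)ᵀ = J'(φ(x))`: `φ` is a Poisson map at `x` from the
structure matrix `J` to the structure matrix `J'`. -/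
def PoissonMapAt {N : ℕ} [NeZero N] (φ : Phase N → Phase N) (J J' : SM N)
    (x : Phase N) : Prop :=
  ∀ i j : Idx N,
    (∑ k : Idx N, ∑ l : Idx N,
      pderiv k (fun y => φ y i) x * J x k l * pderiv l (fun y => φ y j) x)
      = J' (φ x) i j

/-- `Dφ(x)·f(x) = g(φ(x))`: the vector field `f` is the pull-back of the vector
field `g` under `φ`, at the point `x`. -/
def PullbackAt {N : ℕ} [NeZero N] (φ : Phase N → Phase N)
    (f g : Phase N → Phase N) (x : Phase N) : Prop :=
  ∀ i : Idx N, (∑ k : Idx N, pderiv k (fun y => φ y i) x * f x k) = g (φ x) i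

/-- The modified Toda lattice vector field `MTL(ε)`:
`ṗ_k = (1 + εp_k)(q_k - q_{k-1})`, `q̇_k = q_k(p_{k+1} - p_k)`,
with coordinates `p_k = c1 x k`, `q_k = c2 x k`. -/
noncomputable def mtlF (ε : ℝ) {N : ℕ} (x : Phase N) : Phase N := fun i =>
  match i with
  | Sum.inl k => (1 + ε * c1 x k) * (c2 x k - c2 x (k - 1))
  | Sum.inr k => c2 x k * (c1 x (k + 1) - c1 x k)

/-- Structure matrix `J₁₂` on `ℳ𝒯`: `{p_k,q_k} = -q_k(1+εp_k)`,
`{q_k,p_{k+1}} = -q_k(1+εp_{k+1})`. -/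
noncomputable def JMT12 (ε : ℝ) {N : ℕ} (x : Phase N) : Idx N → Idx N → ℝ := fun i₁ i₂ =>
  match i₁, i₂ with
  | Sum.inl j, Sum.inr k =>
      if j = k then -(c2 x k * (1 + ε * c1 x k))
      else if j = k + 1 then c2 x k * (1 + ε * c1 x (k + 1)) else 0
  | Sum.inr k, Sum.inl j =>
      if j = k then c2 x k * (1 + ε * c1 x k)
      else if j = k + 1 then -(c2 x k * (1 + ε * c1 x (k + 1))) else 0
  | _, _ => 0

/-- Structure matrix `J₂₃` on `ℳ𝒯`. -/
noncomputable def JMT23 (ε : ℝ) {N : ℕ} (x : Phase N) : Idx N → Idx N → ℝ := fun i₁ i₂ =>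
  match i₁, i₂ with
  | Sum.inl j, Sum.inr k =>
      if j = k then -(c2 x k * (c1 x k + ε * c2 x k) * (1 + ε * c1 x k))
      else if j = k + 1 then
        c2 x k * (c1 x (k + 1) + ε * c2 x k) * (1 + ε * c1 x (k + 1))
      else 0
  | Sum.inr k, Sum.inl j =>
      if j = k then c2 x k * (c1 x k + ε * c2 x k) * (1 + ε * c1 x k)
      else if j = k + 1 then
        -(c2 x k * (c1 x (k + 1) + ε * c2 x k) * (1 + ε * c1 x (k + 1)))
      else 0
  | Sum.inl j, Sum.inl l =>
      if l = j + 1 then -(c2 x j * (1 + ε * c1 x j) * (1 + ε * c1 x (j + 1)))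
      else if j = l + 1 then c2 x l * (1 + ε * c1 x l) * (1 + ε * c1 x (l + 1))
      else 0
  | Sum.inr j, Sum.inr l =>
      if l = j + 1 then -(c2 x j * c2 x (j + 1) * (1 + ε * c1 x (j + 1)))
      else if j = l + 1 then c2 x l * c2 x (l + 1) * (1 + ε * c1 x (l + 1))
      else 0

/-- The double modified Toda lattice vector field `M²TL(ε,δ)`:
`ṙ_k = (1+εr_k)(1+δr_k)(s_k - s_{k-1})`, `ṡ_k = s_k(1+εδs_k)(r_{k+1} - r_k)`,
with coordinates `r_k = c1 x k`, `s_k = c2 x k`. -/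
noncomputable def m2tlF (ε δ : ℝ) {N : ℕ} (x : Phase N) : Phase N := fun i =>
  match i with
  | Sum.inl k => (1 + ε * c1 x k) * (1 + δ * c1 x k) * (c2 x k - c2 x (k - 1))
  | Sum.inr k => c2 x k * (1 + ε * δ * c2 x k) * (c1 x (k + 1) - c1 x k)

/-- Structure matrix `J₁₂₃` on `ℳ²𝒯`. -/
noncomputable def J123 (ε δ : ℝ) {N : ℕ} (x : Phase N) : Idx N → Idx N → ℝ := fun i₁ i₂ =>
  match i₁, i₂ with
  | Sum.inl j, Sum.inr k =>
      if j = k then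
        -(c2 x k * (1 + ε * δ * c2 x k) * (1 + ε * c1 x k) * (1 + δ * c1 x k))
      else if j = k + 1 then
        c2 x k * (1 + ε * δ * c2 x k) * (1 + ε * c1 x (k + 1)) * (1 + δ * c1 x (k + 1))
      else 0
  | Sum.inr k, Sum.inl j =>
      if j = k then
        c2 x k * (1 + ε * δ * c2 x k) * (1 + ε * c1 x k) * (1 + δ * c1 x k)
      else if j = k + 1 then
        -(c2 x k * (1 + ε * δ * c2 x k) * (1 + ε * c1 x (k + 1)) * (1 + δ * c1 x (k + 1)))
      else 0
  | _, _ => 0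

/-- Miura map `M₁(ε;δ) : ℳ²𝒯 → ℳ𝒯`: `p_k = r_k + δs_{k-1}(1+εr_k)`, `q_k = s_k(1+δr_k)`. -/
noncomputable def miuraM2T1 (ε δ : ℝ) {N : ℕ} (x : Phase N) : Phase N := fun i =>
  match i with
  | Sum.inl k => c1 x k + δ * c2 x (k - 1) * (1 + ε * c1 x k)
  | Sum.inr k => c2 x k * (1 + δ * c1 x k)

/-- Miura map `M₂(ε;δ) : ℳ²𝒯 → ℳ𝒯`: `p_k = r_k + δs_k(1+εr_k)`, `q_k = s_k(1+δr_{k+1})`. -/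
noncomputable def miuraM2T2 (ε δ : ℝ) {N : ℕ} (x : Phase N) : Phase N := fun i =>
  match i with
  | Sum.inl k => c1 x k + δ * c2 x k * (1 + ε * c1 x k)
  | Sum.inr k => c2 x k * (1 + δ * c1 x (k + 1))

section Helpers
variable {N : ℕ} [NeZero N]

lemma hasFDerivAt_coord (j : Idx N) (x : Phase N) :
    HasFDerivAt (fun y : Phase N => y j) (ContinuousLinearMap.proj j : Phase N →L[ℝ] ℝ) x :=
  (ContinuousLinearMap.proj j : Phase N →L[ℝ] ℝ).hasFDerivAt

lemma pd_M1_l (ε δ : ℝ) (k : ZMod N) (i : Idx N) (x : Phase N) :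
    pderiv i (fun y => miuraM2T1 ε δ y (Sum.inl k)) x =
      (if (Sum.inl k : Idx N) = i then 1 + δ * c2 x (k-1) * ε else 0)
      + (if (Sum.inr (k-1) : Idx N) = i then δ * (1 + ε * c1 x k) else 0) := by
  have h1 := hasFDerivAt_coord (Sum.inl k) x
  have h2 := hasFDerivAt_coord (Sum.inr (k-1) : Idx N) x
  have h : HasFDerivAt (fun y => miuraM2T1 ε δ y (Sum.inl k)) _ x :=
    h1.add (((h2.const_mul δ).mul ((h1.const_mul ε).const_add 1)))
  rw [pderiv, h.fderiv]
  simp [Pi.single_apply, c1, c2]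
  split_ifs <;> simp_all <;> ring

lemma pd_M1_r (ε δ : ℝ) (k : ZMod N) (i : Idx N) (x : Phase N) :
    pderiv i (fun y => miuraM2T1 ε δ y (Sum.inr k)) x =
      (if (Sum.inr k : Idx N) = i then 1 + δ * c1 x k else 0)
      + (if (Sum.inl k : Idx N) = i then c2 x k * δ else 0) := by
  have h1 := hasFDerivAt_coord (Sum.inl k : Idx N) x
  have h2 := hasFDerivAt_coord (Sum.inr k : Idx N) x
  have h : HasFDerivAt (fun y => miuraM2T1 ε δ y (Sum.inr k)) _ x :=
    h2.mul ((h1.const_mul δ).const_add 1)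
  rw [pderiv, h.fderiv]
  simp [Pi.single_apply, c1, c2]
  split_ifs <;> simp_all <;> ring

lemma pd_M2_l (ε δ : ℝ) (k : ZMod N) (i : Idx N) (x : Phase N) :
    pderiv i (fun y => miuraM2T2 ε δ y (Sum.inl k)) x =
      (if (Sum.inl k : Idx N) = i then 1 + δ * c2 x k * ε else 0)
      + (if (Sum.inr k : Idx N) = i then δ * (1 + ε * c1 x k) else 0) := by
  have h1 := hasFDerivAt_coord (Sum.inl k : Idx N) x
  have h2 := hasFDerivAt_coord (Sum.inr k : Idx N) x
  have h : HasFDerivAt (fun y => miuraM2T2 ε δ y (Sum.inl k)) _ x :=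
    h1.add (((h2.const_mul δ).mul ((h1.const_mul ε).const_add 1)))
  rw [pderiv, h.fderiv]
  simp [Pi.single_apply, c1, c2]
  split_ifs <;> simp_all <;> ring

lemma pd_M2_r (ε δ : ℝ) (k : ZMod N) (i : Idx N) (x : Phase N) :
    pderiv i (fun y => miuraM2T2 ε δ y (Sum.inr k)) x =
      (if (Sum.inr k : Idx N) = i then 1 + δ * c1 x (k+1) else 0)
      + (if (Sum.inl (k+1) : Idx N) = i then c2 x k * δ else 0) := by
  have h1 := hasFDerivAt_coord (Sum.inl (k+1) : Idx N) x
  have h2 := hasFDerivAt_coord (Sum.inr k : Idx N) x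
  have h : HasFDerivAt (fun y => miuraM2T2 ε δ y (Sum.inr k)) _ x :=
    h2.mul ((h1.const_mul δ).const_add 1)
  rw [pderiv, h.fderiv]
  simp [Pi.single_apply, c1, c2]
  split_ifs <;> simp_all <;> ring

end Helpers

section Main
variable {N : ℕ} [NeZero N]

lemma zmod_ne {N : ℕ} (hN : 5 ≤ N) {m : ℕ} (hm1 : 0 < m) (hm2 : m < 5) : (m : ZMod N) ≠ 0 := by
  have : NeZero N := ⟨by omega⟩
  intro h
  rw [ZMod.natCast_eq_zero_iff] at h
  have := Nat.le_of_dvd hm1 h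
  omega


set_option maxHeartbeats 3000000 in
lemma poisson_M1_ll (hN : 5 ≤ N) (ε δ : ℝ) (x : Phase N) (a b : ZMod N) :
    (∑ k : Idx N, ∑ l : Idx N,
      pderiv k (fun y => miuraM2T1 ε δ y (Sum.inl a)) x * J123 ε δ x k l *
        pderiv l (fun y => miuraM2T1 ε δ y (Sum.inl b)) x)
    = JMT12 ε (miuraM2T1 ε δ x) (Sum.inl a) (Sum.inl b)
      + δ * JMT23 ε (miuraM2T1 ε δ x) (Sum.inl a) (Sum.inl b) := by
  have h1 : (1 : ZMod N) ≠ 0 := by simpa using zmod_ne hN (m := 1) (by norm_num) (by norm_num)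
  have h2 : (1 + 1 : ZMod N) ≠ 0 := by
    simpa [one_add_one_eq_two] using zmod_ne hN (m := 2) (by norm_num) (by norm_num)
  have h3 : (1 + (1 + 1) : ZMod N) ≠ 0 := by
    have := zmod_ne hN (m := 3) (by norm_num) (by norm_num)
    intro h; apply this; rw [show ((3:ℕ):ZMod N) = 1 + (1+1) by push_cast; ring]; exact h
  simp only [pd_M1_l, pd_M1_r, add_mul, mul_add, ite_mul, mul_ite, zero_mul, mul_zero,
    Finset.sum_add_distrib, Finset.sum_ite_irrel, Finset.sum_const_zero,
    Finset.sum_ite_eq, Finset.mem_univ, if_true, zero_add, add_zero]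
  simp only [J123, JMT12, JMT23, miuraM2T1, c1, c2, sub_add_cancel, add_sub_cancel_right,
    add_left_inj, eq_self_iff_true, if_true]
  split_ifs <;> (try subst_vars) <;>
    (try simp only [sub_add_cancel, add_sub_cancel_right]) <;>
    first
      | ring1
      | (exfalso;
          simp only [sub_add_cancel, add_sub_cancel_right, eq_sub_iff_add_eq, sub_eq_iff_eq_add,
            add_assoc, add_left_inj, left_eq_add, add_eq_left, h1, h2, h3,
            eq_self_iff_true, not_true, not_false_iff] at * <;>
          contradiction)


set_option maxHeartbeats 3000000 in
lemma poisson_M1_lr (hN : 5 ≤ N) (ε δ : ℝ) (x : Phase N) (a b : ZMod N) :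
    (∑ k : Idx N, ∑ l : Idx N,
      pderiv k (fun y => miuraM2T1 ε δ y (Sum.inl a)) x * J123 ε δ x k l *
        pderiv l (fun y => miuraM2T1 ε δ y (Sum.inr b)) x)
    = JMT12 ε (miuraM2T1 ε δ x) (Sum.inl a) (Sum.inr b)
      + δ * JMT23 ε (miuraM2T1 ε δ x) (Sum.inl a) (Sum.inr b) := by
  have h1 : (1 : ZMod N) ≠ 0 := by simpa using zmod_ne hN (m := 1) (by norm_num) (by norm_num)
  have h2 : (1 + 1 : ZMod N) ≠ 0 := by
    simpa [one_add_one_eq_two] using zmod_ne hN (m := 2) (by norm_num) (by norm_num)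
  have h3 : (1 + (1 + 1) : ZMod N) ≠ 0 := by
    have := zmod_ne hN (m := 3) (by norm_num) (by norm_num)
    intro h; apply this; rw [show ((3:ℕ):ZMod N) = 1 + (1+1) by push_cast; ring]; exact h
  simp only [pd_M1_l, pd_M1_r, add_mul, mul_add, ite_mul, mul_ite, zero_mul, mul_zero,
    Finset.sum_add_distrib, Finset.sum_ite_irrel, Finset.sum_const_zero,
    Finset.sum_ite_eq, Finset.mem_univ, if_true, zero_add, add_zero]
  simp only [J123, JMT12, JMT23, miuraM2T1, c1, c2, sub_add_cancel, add_sub_cancel_right,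
    add_left_inj, eq_self_iff_true, if_true]
  split_ifs <;> (try subst_vars) <;>
    (try simp only [sub_add_cancel, add_sub_cancel_right]) <;>
    first
      | ring1
      | (exfalso;
          simp only [sub_add_cancel, add_sub_cancel_right, eq_sub_iff_add_eq, sub_eq_iff_eq_add,
            add_assoc, add_left_inj, left_eq_add, add_eq_left, h1, h2, h3,
            eq_self_iff_true, not_true, not_false_iff] at * <;>
          contradiction)


set_option maxHeartbeats 3000000 in
lemma poisson_M1_rl (hN : 5 ≤ N) (ε δ : ℝ) (x : Phase N) (a b : ZMod N) :
    (∑ k : Idx N, ∑ l : Idx N,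
      pderiv k (fun y => miuraM2T1 ε δ y (Sum.inr a)) x * J123 ε δ x k l *
        pderiv l (fun y => miuraM2T1 ε δ y (Sum.inl b)) x)
    = JMT12 ε (miuraM2T1 ε δ x) (Sum.inr a) (Sum.inl b)
      + δ * JMT23 ε (miuraM2T1 ε δ x) (Sum.inr a) (Sum.inl b) := by
  have h1 : (1 : ZMod N) ≠ 0 := by simpa using zmod_ne hN (m := 1) (by norm_num) (by norm_num)
  have h2 : (1 + 1 : ZMod N) ≠ 0 := by
    simpa [one_add_one_eq_two] using zmod_ne hN (m := 2) (by norm_num) (by norm_num)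
  have h3 : (1 + (1 + 1) : ZMod N) ≠ 0 := by
    have := zmod_ne hN (m := 3) (by norm_num) (by norm_num)
    intro h; apply this; rw [show ((3:ℕ):ZMod N) = 1 + (1+1) by push_cast; ring]; exact h
  simp only [pd_M1_l, pd_M1_r, add_mul, mul_add, ite_mul, mul_ite, zero_mul, mul_zero,
    Finset.sum_add_distrib, Finset.sum_ite_irrel, Finset.sum_const_zero,
    Finset.sum_ite_eq, Finset.mem_univ, if_true, zero_add, add_zero]
  simp only [J123, JMT12, JMT23, miuraM2T1, c1, c2, sub_add_cancel, add_sub_cancel_right,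
    add_left_inj, eq_self_iff_true, if_true]
  split_ifs <;> (try subst_vars) <;>
    (try simp only [sub_add_cancel, add_sub_cancel_right]) <;>
    first
      | ring1
      | (exfalso;
          simp only [sub_add_cancel, add_sub_cancel_right, eq_sub_iff_add_eq, sub_eq_iff_eq_add,
            add_assoc, add_left_inj, left_eq_add, add_eq_left, h1, h2, h3,
            eq_self_iff_true, not_true, not_false_iff] at * <;>
          contradiction)


set_option maxHeartbeats 3000000 in
lemma poisson_M1_rr (hN : 5 ≤ N) (ε δ : ℝ) (x : Phase N) (a b : ZMod N) :
    (∑ k : Idx N, ∑ l : Idx N,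
      pderiv k (fun y => miuraM2T1 ε δ y (Sum.inr a)) x * J123 ε δ x k l *
        pderiv l (fun y => miuraM2T1 ε δ y (Sum.inr b)) x)
    = JMT12 ε (miuraM2T1 ε δ x) (Sum.inr a) (Sum.inr b)
      + δ * JMT23 ε (miuraM2T1 ε δ x) (Sum.inr a) (Sum.inr b) := by
  have h1 : (1 : ZMod N) ≠ 0 := by simpa using zmod_ne hN (m := 1) (by norm_num) (by norm_num)
  have h2 : (1 + 1 : ZMod N) ≠ 0 := by
    simpa [one_add_one_eq_two] using zmod_ne hN (m := 2) (by norm_num) (by norm_num)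
  have h3 : (1 + (1 + 1) : ZMod N) ≠ 0 := by
    have := zmod_ne hN (m := 3) (by norm_num) (by norm_num)
    intro h; apply this; rw [show ((3:ℕ):ZMod N) = 1 + (1+1) by push_cast; ring]; exact h
  simp only [pd_M1_l, pd_M1_r, add_mul, mul_add, ite_mul, mul_ite, zero_mul, mul_zero,
    Finset.sum_add_distrib, Finset.sum_ite_irrel, Finset.sum_const_zero,
    Finset.sum_ite_eq, Finset.mem_univ, if_true, zero_add, add_zero]
  simp only [J123, JMT12, JMT23, miuraM2T1, c1, c2, sub_add_cancel, add_sub_cancel_right,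
    add_left_inj, eq_self_iff_true, if_true]
  split_ifs <;> (try subst_vars) <;>
    (try simp only [sub_add_cancel, add_sub_cancel_right]) <;>
    first
      | ring1
      | (exfalso;
          simp only [sub_add_cancel, add_sub_cancel_right, eq_sub_iff_add_eq, sub_eq_iff_eq_add,
            add_assoc, add_left_inj, left_eq_add, add_eq_left, h1, h2, h3,
            eq_self_iff_true, not_true, not_false_iff] at * <;>
          contradiction)


set_option maxHeartbeats 1000000 in
lemma pull_M1_l (ε δ : ℝ) (x : Phase N) (a : ZMod N) :
    (∑ k : Idx N, pderiv k (fun y => miuraM2T1 ε δ y (Sum.inl a)) x * m2tlF ε δ x k)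
    = mtlF ε (miuraM2T1 ε δ x) (Sum.inl a) := by
  simp only [pd_M1_l, pd_M1_r, add_mul, mul_add, ite_mul, mul_ite, zero_mul, mul_zero,
    Finset.sum_add_distrib, Finset.sum_ite_irrel, Finset.sum_const_zero,
    Finset.sum_ite_eq, Finset.mem_univ, if_true, zero_add, add_zero]
  simp only [m2tlF, mtlF, miuraM2T1, c1, c2, sub_add_cancel, add_sub_cancel_right]
  ring


set_option maxHeartbeats 1000000 in
lemma pull_M1_r (ε δ : ℝ) (x : Phase N) (a : ZMod N) :
    (∑ k : Idx N, pderiv k (fun y => miuraM2T1 ε δ y (Sum.inr a)) x * m2tlF ε δ x k)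
    = mtlF ε (miuraM2T1 ε δ x) (Sum.inr a) := by
  simp only [pd_M1_l, pd_M1_r, add_mul, mul_add, ite_mul, mul_ite, zero_mul, mul_zero,
    Finset.sum_add_distrib, Finset.sum_ite_irrel, Finset.sum_const_zero,
    Finset.sum_ite_eq, Finset.mem_univ, if_true, zero_add, add_zero]
  simp only [m2tlF, mtlF, miuraM2T1, c1, c2, sub_add_cancel, add_sub_cancel_right]
  ring


set_option maxHeartbeats 3000000 in
lemma poisson_M2_ll (hN : 5 ≤ N) (ε δ : ℝ) (x : Phase N) (a b : ZMod N) :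
    (∑ k : Idx N, ∑ l : Idx N,
      pderiv k (fun y => miuraM2T2 ε δ y (Sum.inl a)) x * J123 ε δ x k l *
        pderiv l (fun y => miuraM2T2 ε δ y (Sum.inl b)) x)
    = JMT12 ε (miuraM2T2 ε δ x) (Sum.inl a) (Sum.inl b)
      + δ * JMT23 ε (miuraM2T2 ε δ x) (Sum.inl a) (Sum.inl b) := by
  have h1 : (1 : ZMod N) ≠ 0 := by simpa using zmod_ne hN (m := 1) (by norm_num) (by norm_num)
  have h2 : (1 + 1 : ZMod N) ≠ 0 := by
    simpa [one_add_one_eq_two] using zmod_ne hN (m := 2) (by norm_num) (by norm_num)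
  have h3 : (1 + (1 + 1) : ZMod N) ≠ 0 := by
    have := zmod_ne hN (m := 3) (by norm_num) (by norm_num)
    intro h; apply this; rw [show ((3:ℕ):ZMod N) = 1 + (1+1) by push_cast; ring]; exact h
  simp only [pd_M2_l, pd_M2_r, add_mul, mul_add, ite_mul, mul_ite, zero_mul, mul_zero,
    Finset.sum_add_distrib, Finset.sum_ite_irrel, Finset.sum_const_zero,
    Finset.sum_ite_eq, Finset.mem_univ, if_true, zero_add, add_zero]
  simp only [J123, JMT12, JMT23, miuraM2T2, c1, c2, sub_add_cancel, add_sub_cancel_right,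
    add_left_inj, eq_self_iff_true, if_true]
  split_ifs <;> (try subst_vars) <;>
    (try simp only [sub_add_cancel, add_sub_cancel_right]) <;>
    first
      | ring1
      | (exfalso;
          simp only [sub_add_cancel, add_sub_cancel_right, eq_sub_iff_add_eq, sub_eq_iff_eq_add,
            add_assoc, add_left_inj, left_eq_add, add_eq_left, h1, h2, h3,
            eq_self_iff_true, not_true, not_false_iff] at * <;>
          contradiction)


set_option maxHeartbeats 3000000 in
lemma poisson_M2_lr (hN : 5 ≤ N) (ε δ : ℝ) (x : Phase N) (a b : ZMod N) :
    (∑ k : Idx N, ∑ l : Idx N,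
      pderiv k (fun y => miuraM2T2 ε δ y (Sum.inl a)) x * J123 ε δ x k l *
        pderiv l (fun y => miuraM2T2 ε δ y (Sum.inr b)) x)
    = JMT12 ε (miuraM2T2 ε δ x) (Sum.inl a) (Sum.inr b)
      + δ * JMT23 ε (miuraM2T2 ε δ x) (Sum.inl a) (Sum.inr b) := by
  have h1 : (1 : ZMod N) ≠ 0 := by simpa using zmod_ne hN (m := 1) (by norm_num) (by norm_num)
  have h2 : (1 + 1 : ZMod N) ≠ 0 := by
    simpa [one_add_one_eq_two] using zmod_ne hN (m := 2) (by norm_num) (by norm_num)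
  have h3 : (1 + (1 + 1) : ZMod N) ≠ 0 := by
    have := zmod_ne hN (m := 3) (by norm_num) (by norm_num)
    intro h; apply this; rw [show ((3:ℕ):ZMod N) = 1 + (1+1) by push_cast; ring]; exact h
  simp only [pd_M2_l, pd_M2_r, add_mul, mul_add, ite_mul, mul_ite, zero_mul, mul_zero,
    Finset.sum_add_distrib, Finset.sum_ite_irrel, Finset.sum_const_zero,
    Finset.sum_ite_eq, Finset.mem_univ, if_true, zero_add, add_zero]
  simp only [J123, JMT12, JMT23, miuraM2T2, c1, c2, sub_add_cancel, add_sub_cancel_right,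
    add_left_inj, eq_self_iff_true, if_true]
  split_ifs <;> (try subst_vars) <;>
    (try simp only [sub_add_cancel, add_sub_cancel_right]) <;>
    first
      | ring1
      | (exfalso;
          simp only [sub_add_cancel, add_sub_cancel_right, eq_sub_iff_add_eq, sub_eq_iff_eq_add,
            add_assoc, add_left_inj, left_eq_add, add_eq_left, h1, h2, h3,
            eq_self_iff_true, not_true, not_false_iff] at * <;>
          contradiction)


set_option maxHeartbeats 3000000 in
lemma poisson_M2_rl (hN : 5 ≤ N) (ε δ : ℝ) (x : Phase N) (a b : ZMod N) :
    (∑ k : Idx N, ∑ l : Idx N,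
      pderiv k (fun y => miuraM2T2 ε δ y (Sum.inr a)) x * J123 ε δ x k l *
        pderiv l (fun y => miuraM2T2 ε δ y (Sum.inl b)) x)
    = JMT12 ε (miuraM2T2 ε δ x) (Sum.inr a) (Sum.inl b)
      + δ * JMT23 ε (miuraM2T2 ε δ x) (Sum.inr a) (Sum.inl b) := by
  have h1 : (1 : ZMod N) ≠ 0 := by simpa using zmod_ne hN (m := 1) (by norm_num) (by norm_num)
  have h2 : (1 + 1 : ZMod N) ≠ 0 := by
    simpa [one_add_one_eq_two] using zmod_ne hN (m := 2) (by norm_num) (by norm_num)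
  have h3 : (1 + (1 + 1) : ZMod N) ≠ 0 := by
    have := zmod_ne hN (m := 3) (by norm_num) (by norm_num)
    intro h; apply this; rw [show ((3:ℕ):ZMod N) = 1 + (1+1) by push_cast; ring]; exact h
  simp only [pd_M2_l, pd_M2_r, add_mul, mul_add, ite_mul, mul_ite, zero_mul, mul_zero,
    Finset.sum_add_distrib, Finset.sum_ite_irrel, Finset.sum_const_zero,
    Finset.sum_ite_eq, Finset.mem_univ, if_true, zero_add, add_zero]
  simp only [J123, JMT12, JMT23, miuraM2T2, c1, c2, sub_add_cancel, add_sub_cancel_right,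
    add_left_inj, eq_self_iff_true, if_true]
  split_ifs <;> (try subst_vars) <;>
    (try simp only [sub_add_cancel, add_sub_cancel_right]) <;>
    first
      | ring1
      | (exfalso;
          simp only [sub_add_cancel, add_sub_cancel_right, eq_sub_iff_add_eq, sub_eq_iff_eq_add,
            add_assoc, add_left_inj, left_eq_add, add_eq_left, h1, h2, h3,
            eq_self_iff_true, not_true, not_false_iff] at * <;>
          contradiction)


set_option maxHeartbeats 3000000 in
lemma poisson_M2_rr (hN : 5 ≤ N) (ε δ : ℝ) (x : Phase N) (a b : ZMod N) :
    (∑ k : Idx N, ∑ l : Idx N,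
      pderiv k (fun y => miuraM2T2 ε δ y (Sum.inr a)) x * J123 ε δ x k l *
        pderiv l (fun y => miuraM2T2 ε δ y (Sum.inr b)) x)
    = JMT12 ε (miuraM2T2 ε δ x) (Sum.inr a) (Sum.inr b)
      + δ * JMT23 ε (miuraM2T2 ε δ x) (Sum.inr a) (Sum.inr b) := by
  have h1 : (1 : ZMod N) ≠ 0 := by simpa using zmod_ne hN (m := 1) (by norm_num) (by norm_num)
  have h2 : (1 + 1 : ZMod N) ≠ 0 := by
    simpa [one_add_one_eq_two] using zmod_ne hN (m := 2) (by norm_num) (by norm_num)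
  have h3 : (1 + (1 + 1) : ZMod N) ≠ 0 := by
    have := zmod_ne hN (m := 3) (by norm_num) (by norm_num)
    intro h; apply this; rw [show ((3:ℕ):ZMod N) = 1 + (1+1) by push_cast; ring]; exact h
  simp only [pd_M2_l, pd_M2_r, add_mul, mul_add, ite_mul, mul_ite, zero_mul, mul_zero,
    Finset.sum_add_distrib, Finset.sum_ite_irrel, Finset.sum_const_zero,
    Finset.sum_ite_eq, Finset.mem_univ, if_true, zero_add, add_zero]
  simp only [J123, JMT12, JMT23, miuraM2T2, c1, c2, sub_add_cancel, add_sub_cancel_right,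
    add_left_inj, eq_self_iff_true, if_true]
  split_ifs <;> (try subst_vars) <;>
    (try simp only [sub_add_cancel, add_sub_cancel_right]) <;>
    first
      | ring1
      | (exfalso;
          simp only [sub_add_cancel, add_sub_cancel_right, eq_sub_iff_add_eq, sub_eq_iff_eq_add,
            add_assoc, add_left_inj, left_eq_add, add_eq_left, h1, h2, h3,
            eq_self_iff_true, not_true, not_false_iff] at * <;>
          contradiction)


set_option maxHeartbeats 1000000 in
lemma pull_M2_l (ε δ : ℝ) (x : Phase N) (a : ZMod N) :
    (∑ k : Idx N, pderiv k (fun y => miuraM2T2 ε δ y (Sum.inl a)) x * m2tlF ε δ x k)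
    = mtlF ε (miuraM2T2 ε δ x) (Sum.inl a) := by
  simp only [pd_M2_l, pd_M2_r, add_mul, mul_add, ite_mul, mul_ite, zero_mul, mul_zero,
    Finset.sum_add_distrib, Finset.sum_ite_irrel, Finset.sum_const_zero,
    Finset.sum_ite_eq, Finset.mem_univ, if_true, zero_add, add_zero]
  simp only [m2tlF, mtlF, miuraM2T2, c1, c2, sub_add_cancel, add_sub_cancel_right]
  ring


set_option maxHeartbeats 1000000 in
lemma pull_M2_r (ε δ : ℝ) (x : Phase N) (a : ZMod N) :
    (∑ k : Idx N, pderiv k (fun y => miuraM2T2 ε δ y (Sum.inr a)) x * m2tlF ε δ x k)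
    = mtlF ε (miuraM2T2 ε δ x) (Sum.inr a) := by
  simp only [pd_M2_l, pd_M2_r, add_mul, mul_add, ite_mul, mul_ite, zero_mul, mul_zero,
    Finset.sum_add_distrib, Finset.sum_ite_irrel, Finset.sum_const_zero,
    Finset.sum_ite_eq, Finset.mem_univ, if_true, zero_add, add_zero]
  simp only [m2tlF, mtlF, miuraM2T2, c1, c2, sub_add_cancel, add_sub_cancel_right]
  ring


end Main


/-- both Miura maps `M₁(ε;δ), M₂(ε;δ) : ℳ²𝒯 → ℳ𝒯` are Poisson from
`{·,·}₁₂₃` to `{·,·}₁₂ + δ{·,·}₂₃`, and the pull-back of `MTL(ε)` under either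
of them coincides with `M²TL(ε,δ)`. -/
theorem stmt9 (N : ℕ) [NeZero N] (hN : 5 ≤ N) (ε δ : ℝ) :
    (∀ x : Phase N, PoissonMapAt (miuraM2T1 ε δ) (J123 ε δ)
      (fun y i j => JMT12 ε y i j + δ * JMT23 ε y i j) x) ∧
    (∀ x : Phase N, PoissonMapAt (miuraM2T2 ε δ) (J123 ε δ)
      (fun y i j => JMT12 ε y i j + δ * JMT23 ε y i j) x) ∧
    (∀ x : Phase N, PullbackAt (miuraM2T1 ε δ) (m2tlF ε δ) (mtlF ε) x) ∧
    (∀ x : Phase N, PullbackAt (miuraM2T2 ε δ) (m2tlF ε δ) (mtlF ε) x) := by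
  refine ⟨fun x => ?_, fun x => ?_, fun x => ?_, fun x => ?_⟩
  · rintro (a|a) (b|b)
    · exact poisson_M1_ll hN ε δ x a b
    · exact poisson_M1_lr hN ε δ x a b
    · exact poisson_M1_rl hN ε δ x a b
    · exact poisson_M1_rr hN ε δ x a b
  · rintro (a|a) (b|b)
    · exact poisson_M2_ll hN ε δ x a b
    · exact poisson_M2_lr hN ε δ x a b
    · exact poisson_M2_rl hN ε δ x a b
    · exact poisson_M2_rr hN ε δ x a b
  · rintro (a|a)
    · exact pull_M1_l ε δ x a
    · exact pull_M1_r ε δ x a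
  · rintro (a|a)
    · exact pull_M2_l ε δ x a
    · exact pull_M2_r ε δ x a
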